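/- Let σ be a weight, 1 < p ≤ q < ∞, D a dyadic grid, and S a sparse subset of D with pairwise disjoint sets E_Q ⊆ Q, |E_Q| ≥ |Q|/2. Fix P ∈ D and r ≥ 0, and let S_r = {Q ∈ S, Q ⊆ P : 2^{r-1} ≤ ρ_σ(Q) ≤ 2^r}, where ρ_σ(Q) = (1/σ(Q)) ∫_Q M(σ𝟙_Q) and M is the Hardy–Littlewood maximal operator. Then ∑_{Q ∈ S_r} σ(Q)^{q/p} ≲ 2^{qr/p} σ(P)^{q/p}. -/

import Mathlib

open MeasureTheory Set ENNReal

noncomputable section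

/-- An axis-parallel cube in `ℝⁿ`. -/
structure Cube (n : ℕ) where
  corner : Fin n → ℝ
  side : ℝ
  side_pos : 0 < side

namespace Cube

/-- The underlying (half-open) set of a cube. -/
def toSet {n : ℕ} (Q : Cube n) : Set (Fin n → ℝ) :=
  {x | ∀ i, Q.corner i ≤ x i ∧ x i < Q.corner i + Q.side}

/-- The volume `|Q| = side^n` of a cube. -/
def vol {n : ℕ} (Q : Cube n) : ℝ := Q.side ^ n

end Cube

/-- A dyadic grid: cubes of dyadic side lengths, nested or disjoint, partitioning `ℝⁿ`
at every scale. -/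
def IsDyadicGrid {n : ℕ} (D : Set (Cube n)) : Prop :=
  (∀ Q ∈ D, ∃ k : ℤ, Q.side = 2 ^ k) ∧
  (∀ Q ∈ D, ∀ R ∈ D, (Q.toSet ∩ R.toSet).Nonempty →
      Q.toSet ⊆ R.toSet ∨ R.toSet ⊆ Q.toSet) ∧
  (∀ k : ℤ, (⋃ Q ∈ {Q ∈ D | Q.side = 2 ^ k}, Q.toSet) = univ)

/-- The average `⟨f⟩_Q^μ = (1/μ(Q)) ∫_Q f dμ`. -/
def avg {n : ℕ} (μ : Measure (Fin n → ℝ)) (f : (Fin n → ℝ) → ℝ≥0∞) (Q : Cube n) : ℝ≥0∞ :=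
  (∫⁻ x in Q.toSet, f x ∂μ) / μ Q.toSet

/-- The Lebesgue average `⟨f⟩_Q = (1/|Q|) ∫_Q f`. -/
def lebAvg {n : ℕ} (f : (Fin n → ℝ) → ℝ≥0∞) (Q : Cube n) : ℝ≥0∞ :=
  (∫⁻ x in Q.toSet, f x) / ENNReal.ofReal Q.vol

/-- `σ(Q) = ∫_Q σ dx`. -/
def wt {n : ℕ} (σ : (Fin n → ℝ) → ℝ≥0∞) (Q : Cube n) : ℝ≥0∞ :=
  ∫⁻ x in Q.toSet, σ x

/-- The weighted average `⟨f⟩_Q^σ = (1/σ(Q)) ∫_Q f σ dx`. -/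
def avgw {n : ℕ} (σ f : (Fin n → ℝ) → ℝ≥0∞) (Q : Cube n) : ℝ≥0∞ :=
  (∫⁻ x in Q.toSet, f x * σ x) / wt σ Q

/-- The dyadic fractional maximal operator `M_α^D`. -/
def dyFracMax {n : ℕ} (D : Set (Cube n)) (α : ℝ) (f : (Fin n → ℝ) → ℝ≥0∞)
    (x : Fin n → ℝ) : ℝ≥0∞ :=
  ⨆ (Q : Cube n) (_ : Q ∈ D) (_ : x ∈ Q.toSet),
    ENNReal.ofReal (Q.vol ^ (α / (n : ℝ))) * lebAvg f Q

/-- The fractional maximal operator `M_α` (supremum over all cubes). -/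
def fracMax {n : ℕ} (α : ℝ) (f : (Fin n → ℝ) → ℝ≥0∞) (x : Fin n → ℝ) : ℝ≥0∞ :=
  ⨆ (Q : Cube n) (_ : x ∈ Q.toSet), ENNReal.ofReal (Q.vol ^ (α / (n : ℝ))) * lebAvg f Q

/-- The Hardy–Littlewood maximal operator (over all cubes). -/
def hlMax {n : ℕ} (f : (Fin n → ℝ) → ℝ≥0∞) (x : Fin n → ℝ) : ℝ≥0∞ :=
  ⨆ (Q : Cube n) (_ : x ∈ Q.toSet), lebAvg f Q

/-- The entropy functional `ρ_σ(Q) = (1/σ(Q)) ∫_Q M(σ 1_Q)`. -/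
def entropy {n : ℕ} (σ : (Fin n → ℝ) → ℝ≥0∞) (Q : Cube n) : ℝ≥0∞ :=
  (∫⁻ x in Q.toSet, hlMax (Q.toSet.indicator σ) x) / wt σ Q

/-- The fractional integral operator `I_α f (x) = ∫ f(y) |x-y|^{α-n} dy`. -/
def fracInt {n : ℕ} (α : ℝ) (f : (Fin n → ℝ) → ℝ≥0∞) (x : Fin n → ℝ) : ℝ≥0∞ :=
  ∫⁻ y, f y * ENNReal.ofReal (Real.sqrt (∑ i, (x i - y i) ^ 2) ^ (α - (n : ℝ)))

/-- `Q` is a maximal element of `S` strictly contained in `P`. -/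
def IsMaxChild {n : ℕ} (S : Set (Cube n)) (P Q : Cube n) : Prop :=
  Q ∈ S ∧ Q.toSet ⊂ P.toSet ∧
    ∀ R ∈ S, R.toSet ⊂ P.toSet → Q.toSet ⊆ R.toSet → R.toSet ⊆ Q.toSet

/-- A sparse collection of cubes: the maximal elements strictly inside any `P` in the
collection have total volume at most `|P|/2`. -/
def IsSparse {n : ℕ} (S : Set (Cube n)) : Prop :=
  ∀ P ∈ S, (∑' Q : {Q : Cube n // IsMaxChild S P Q}, ENNReal.ofReal Q.1.vol)
      ≤ ENNReal.ofReal P.vol / 2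

/-- `P` is the `S`-parent of `Q`: the minimal element of `S` containing `Q`. -/
def IsSParent {n : ℕ} (S : Set (Cube n)) (Q P : Cube n) : Prop :=
  P ∈ S ∧ Q.toSet ⊆ P.toSet ∧ ∀ R ∈ S, Q.toSet ⊆ R.toSet → P.toSet ⊆ R.toSet

/-- The separated-bump entropy functional
`ϱ_σ^{α,p,q}(Q) = σ(Q)^{-q/p} ∫_Q M_α(1_Q σ)^{q/p}`. -/
def sepRho {n : ℕ} (α p q : ℝ) (σ : (Fin n → ℝ) → ℝ≥0∞) (Q : Cube n) : ℝ≥0∞ :=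
  (∫⁻ x in Q.toSet, fracMax α (Q.toSet.indicator σ) x ^ (q / p)) / wt σ Q ^ (q / p)

/-- The separated entropy bump constant `[[σ,w]]_{α,p,q}` with bump function `ε`. -/
def sepBump {n : ℕ} (α p q : ℝ) (ε : ℝ → ℝ) (σ w : (Fin n → ℝ) → ℝ≥0∞) : ℝ≥0∞ :=
  ⨆ Q : Cube n,
    (ENNReal.ofReal (Q.vol ^ (α / (n : ℝ))) * lebAvg σ Q) ^ (q * (1 - 1 / p)) *
      lebAvg w Q * sepRho α p q σ Q * ENNReal.ofReal (ε (sepRho α p q σ Q).toReal)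

/-- The one-bump entropy quantity for the fractional maximal operator:
`β(Q) = |Q|^{α/n-1} σ(Q)^{1/p'} w(Q)^{1/q} ρ_σ(Q)^{1/p} ε_q(ρ_σ(Q))`. -/
def maxBump {n : ℕ} (α p q : ℝ) (εq : ℝ → ℝ) (σ w : (Fin n → ℝ) → ℝ≥0∞)
    (Q : Cube n) : ℝ≥0∞ :=
  ENNReal.ofReal (Q.vol ^ (α / (n : ℝ) - 1)) * wt σ Q ^ (1 - 1 / p) * wt w Q ^ (1 / q) *
    entropy σ Q ^ (1 / p) * ENNReal.ofReal (εq (entropy σ Q).toReal)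

/-- The one-bump entropy quantity for the fractional integral operator:
`β(Q) = |Q|^{α/n-1} σ(Q)^{1/p'} w(Q)^{1/q} ρ_σ(Q)^{1/p} ε_p(ρ_σ(Q)) ρ_w(Q)^{1/q'} ε_{q'}(ρ_w(Q))`. -/
def intBump {n : ℕ} (α p q : ℝ) (εp εq' : ℝ → ℝ) (σ w : (Fin n → ℝ) → ℝ≥0∞)
    (Q : Cube n) : ℝ≥0∞ :=
  ENNReal.ofReal (Q.vol ^ (α / (n : ℝ) - 1)) * wt σ Q ^ (1 - 1 / p) * wt w Q ^ (1 / q) *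
    entropy σ Q ^ (1 / p) * ENNReal.ofReal (εp (entropy σ Q).toReal) *
    entropy w Q ^ (1 - 1 / q) * ENNReal.ofReal (εq' (entropy w Q).toReal)

/-!
Each `Q ∈ S` keeps the part of itself not covered by its maximal `S`-children; by sparseness this
part has at least half the volume of `Q`, and these parts are pairwise disjoint. Since
`M(σ 1_m) ≥ σ(Q)/|Q|` on `Q ⊆ m`, summing over them gives the packing condition
`∑_{Q ∈ S, Q ⊆ m} σ(Q) ≤ 2 ∫_m M(σ 1_m) = 2 ρ_σ(m) σ(m) ≤ 2^{r+1} σ(m)` for `m ∈ S_r`.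
Grouping `S_r` under its maximal cubes, which are disjoint subcubes of `P`, and using that
`t ↦ t^{q/p}` is superadditive gives the bound with `C = 2^{q/p}`. In dimension zero every cube
is the single point of `Fin 0 → ℝ`, so the disjoint sets `E_Q` of positive measure leave at most
one cube in `S`.
-/

open Function

namespace Cube

variable {n : ℕ}

theorem toSet_eq_pi (Q : Cube n) :
    Q.toSet = Set.pi univ fun i => Ico (Q.corner i) (Q.corner i + Q.side) := by
  ext x
  simp [Cube.toSet, Set.mem_pi]

theorem measurableSet_toSet (Q : Cube n) : MeasurableSet Q.toSet := by
  rw [toSet_eq_pi]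
  exact MeasurableSet.univ_pi fun _ => measurableSet_Ico

theorem vol_pos (Q : Cube n) : 0 < Q.vol := pow_pos Q.side_pos n

theorem volume_toSet (Q : Cube n) : volume Q.toSet = ENNReal.ofReal Q.vol := by
  simp only [toSet_eq_pi, volume_pi_pi, Real.volume_Ico, add_sub_cancel_left,
    Finset.prod_const, Finset.card_univ, Fintype.card_fin]
  rw [Cube.vol, ENNReal.ofReal_pow Q.side_pos.le]

theorem corner_mem (Q : Cube n) : Q.corner ∈ Q.toSet :=
  fun _ => ⟨le_rfl, lt_add_of_pos_right _ Q.side_pos⟩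

theorem toSet_subset_iff {A B : Cube n} :
    A.toSet ⊆ B.toSet ↔
      ∀ i, B.corner i ≤ A.corner i ∧ A.corner i + A.side ≤ B.corner i + B.side := by
  have hne : (Set.pi univ fun i => Ico (A.corner i) (A.corner i + A.side)).Nonempty :=
    A.toSet_eq_pi ▸ ⟨_, A.corner_mem⟩
  simp only [toSet_eq_pi, Set.pi_subset_pi_iff, hne.ne_empty, or_false, mem_univ, true_implies,
    Set.Ico_subset_Ico_iff (lt_add_of_pos_right _ A.side_pos)]

theorem eq_of_subset_of_side_eq {A B : Cube n} (h : A.toSet ⊆ B.toSet)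
    (hs : A.side = B.side) : A = B := by
  obtain ⟨cA, sA, hA⟩ := A
  obtain ⟨cB, sB, hB⟩ := B
  dsimp only at hs
  subst hs
  rw [toSet_subset_iff] at h
  congr
  funext i
  linarith [h i]

theorem side_le_of_subset (hn : n ≠ 0) {A B : Cube n} (h : A.toSet ⊆ B.toSet) :
    A.side ≤ B.side := by
  linarith [toSet_subset_iff.1 h ⟨0, Nat.pos_of_ne_zero hn⟩]

theorem toSet_injective (hn : n ≠ 0) : Function.Injective (toSet : Cube n → _) :=
  fun _ _ h => eq_of_subset_of_side_eq h.le
    (le_antisymm (side_le_of_subset hn h.le) (side_le_of_subset hn h.ge))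

end Cube

section Dyadic

variable {n : ℕ}

/-- A cube of largest side length in `U` is maximal for inclusion. -/
theorem IsDyadicGrid.exists_maximal {D U : Set (Cube n)} (hD : IsDyadicGrid D) (hn : n ≠ 0)
    (hUD : U ⊆ D) (hU : U.Nonempty) {P : Cube n} (hUP : ∀ R ∈ U, R.toSet ⊆ P.toSet) :
    ∃ m ∈ U, ∀ R ∈ U, m.toSet ⊆ R.toSet → R = m := by
  classical
  obtain ⟨kP, hkP⟩ := pow_unbounded_of_one_lt P.side (by norm_num : (1 : ℝ) < 2)
  have hbdd : ∃ b : ℤ, ∀ k : ℤ, (∃ R ∈ U, R.side = 2 ^ k) → k ≤ b := by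
    refine ⟨kP, fun k ⟨R, hR, hk⟩ => ?_⟩
    have : (2 : ℝ) ^ k < 2 ^ (kP : ℤ) := by
      rw [← hk, zpow_natCast]
      exact (Cube.side_le_of_subset hn (hUP R hR)).trans_lt hkP
    exact ((zpow_lt_zpow_iff_right₀ (by norm_num : (1 : ℝ) < 2)).1 this).le
  have hinh : ∃ k : ℤ, ∃ R ∈ U, R.side = 2 ^ k := by
    obtain ⟨R, hR⟩ := hU
    exact (hD.1 R (hUD hR)).imp fun k hk => ⟨R, hR, hk⟩
  obtain ⟨k₀, ⟨m, hmU, hm⟩, hmax⟩ := Int.exists_greatest_of_bdd hbdd hinh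
  refine ⟨m, hmU, fun R hR hmR => (Cube.eq_of_subset_of_side_eq hmR ?_).symm⟩
  obtain ⟨k, hk⟩ := hD.1 R (hUD hR)
  refine le_antisymm (Cube.side_le_of_subset hn hmR) ?_
  rw [hk, hm]
  exact zpow_le_zpow_right₀ (by norm_num : (1 : ℝ) ≤ 2) (hmax k ⟨R, hR, hk⟩)

theorem IsDyadicGrid.exists_isMaxChild {D S : Set (Cube n)} (hD : IsDyadicGrid D) (hn : n ≠ 0)
    (hSD : S ⊆ D) {Q R : Cube n} (hQ : Q ∈ S) (hQR : Q.toSet ⊂ R.toSet) :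
    ∃ C, IsMaxChild S R C ∧ Q.toSet ⊆ C.toSet := by
  obtain ⟨C, ⟨hCS, hQC, hCR⟩, hmax⟩ :=
    hD.exists_maximal hn (U := {C | C ∈ S ∧ Q.toSet ⊆ C.toSet ∧ C.toSet ⊂ R.toSet})
      (fun C hC => hSD hC.1) ⟨Q, hQ, subset_rfl, hQR⟩ fun C hC => hC.2.2.subset
  refine ⟨C, ⟨hCS, hCR, fun R' hR' hR'R hCR' => ?_⟩, hQC⟩
  rw [hmax R' ⟨hR', hQC.trans hCR', hR'R⟩ hCR']

end Dyadic

section Sparse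

variable {n : ℕ} {S : Set (Cube n)}

theorem IsSparse.countable_setOf_isMaxChild (hS : IsSparse S) {Q : Cube n} (hQ : Q ∈ S) :
    {R | IsMaxChild S Q R}.Countable := by
  have h := Summable.countable_support_ennreal
    ((hS Q hQ).trans_lt (ENNReal.div_lt_top ofReal_ne_top two_ne_zero)).ne
  have hsupp : support (fun R : {R // IsMaxChild S Q R} => ENNReal.ofReal R.1.vol) = univ :=
    eq_univ_of_forall fun R => (ENNReal.ofReal_pos.2 R.1.vol_pos).ne'
  rw [hsupp, countable_univ_iff] at h
  exact Set.countable_coe_iff.1 h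

def freePart (S : Set (Cube n)) (Q : Cube n) : Set (Fin n → ℝ) :=
  Q.toSet \ ⋃ R ∈ {R | IsMaxChild S Q R}, R.toSet

theorem freePart_subset (S : Set (Cube n)) (Q : Cube n) : freePart S Q ⊆ Q.toSet :=
  sdiff_subset

theorem IsSparse.measurableSet_freePart (hS : IsSparse S) {Q : Cube n} (hQ : Q ∈ S) :
    MeasurableSet (freePart S Q) :=
  Q.measurableSet_toSet.diff <|
    .biUnion (hS.countable_setOf_isMaxChild hQ) fun R _ => R.measurableSet_toSet

theorem IsSparse.volume_le_two_mul_volume_freePart (hS : IsSparse S) {Q : Cube n}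
    (hQ : Q ∈ S) : ENNReal.ofReal Q.vol ≤ 2 * volume (freePart S Q) := by
  have hchildren : volume (⋃ R ∈ {R | IsMaxChild S Q R}, R.toSet) ≤ ENNReal.ofReal Q.vol / 2 :=
    calc _ ≤ ∑' R : {R | IsMaxChild S Q R}, volume R.1.toSet :=
          measure_biUnion_le _ (hS.countable_setOf_isMaxChild hQ) _
      _ = ∑' R : {R // IsMaxChild S Q R}, ENNReal.ofReal R.1.vol :=
          tsum_congr fun R => R.1.volume_toSet
      _ ≤ _ := hS Q hQ
  calc ENNReal.ofReal Q.vol = 2 * (ENNReal.ofReal Q.vol - ENNReal.ofReal Q.vol / 2) := by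
        rw [ENNReal.sub_half ofReal_ne_top, ENNReal.mul_div_cancel two_ne_zero ofNat_ne_top]
    _ ≤ 2 * (volume Q.toSet - volume (⋃ R ∈ {R | IsMaxChild S Q R}, R.toSet)) := by
        rw [Q.volume_toSet]
        gcongr
    _ ≤ 2 * volume (freePart S Q) := by
        gcongr
        exact le_measure_sdiff

theorem IsDyadicGrid.pairwiseDisjoint_freePart {D : Set (Cube n)} (hD : IsDyadicGrid D)
    (hn : n ≠ 0) (hSD : S ⊆ D) : S.PairwiseDisjoint (freePart S) := by
  have hnested : ∀ Q ∈ S, ∀ R ∈ S, Q.toSet ⊂ R.toSet → Disjoint (freePart S Q) (freePart S R) := by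
    intro Q hQ R _ hQR
    obtain ⟨C, hC, hQC⟩ := hD.exists_isMaxChild hn hSD hQ hQR
    exact Set.disjoint_left.2 fun x hxQ hxR =>
      hxR.2 (mem_biUnion hC (hQC (freePart_subset S Q hxQ)))
  intro Q hQ R hR hne
  have hne' : Q.toSet ≠ R.toSet := (Cube.toSet_injective hn).ne hne
  by_cases hQR : (Q.toSet ∩ R.toSet).Nonempty
  · rcases hD.2.1 Q (hSD hQ) R (hSD hR) hQR with h | h
    · exact hnested Q hQ R hR (h.ssubset_of_ne hne')
    · exact (hnested R hR Q hQ (h.ssubset_of_ne hne'.symm)).symm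
  · exact (Set.disjoint_iff_inter_eq_empty.2 (Set.not_nonempty_iff_eq_empty.1 hQR)).mono
      (freePart_subset S Q) (freePart_subset S R)

end Sparse

theorem ENNReal.tsum_rpow_le_rpow_tsum {ι : Type*} (a : ι → ℝ≥0∞) {s : ℝ} (hs : 1 ≤ s) :
    ∑' i, a i ^ s ≤ (∑' i, a i) ^ s := by
  have hsplit (x : ℝ≥0∞) : x ^ s = x ^ (s - 1) * x := by
    simpa using rpow_add_of_nonneg (x := x) _ _ (sub_nonneg.2 hs) zero_le_one
  calc ∑' i, a i ^ s = ∑' i, a i ^ (s - 1) * a i := tsum_congr fun i => hsplit _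
    _ ≤ ∑' i, (∑' j, a j) ^ (s - 1) * a i := ENNReal.tsum_le_tsum fun i => by
        gcongr
        exact ENNReal.le_tsum i
    _ = (∑' i, a i) ^ s := by rw [ENNReal.tsum_mul_left, ← hsplit]

theorem tsum_setLIntegral_le_of_pairwise_disjoint {α ι : Type*} [MeasurableSpace α]
    (μ : Measure α) (f : α → ℝ≥0∞) {s : ι → Set α} {t : Set α} (hs : ∀ i, MeasurableSet (s i))
    (hd : Pairwise (Disjoint on s)) (hst : ∀ i, s i ⊆ t) (ht : MeasurableSet t) :
    ∑' i, ∫⁻ x in s i, f x ∂μ ≤ ∫⁻ x in t, f x ∂μ := by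
  simp only [← withDensity_apply _ (hs _), ← withDensity_apply _ ht]
  exact (tsum_meas_le_meas_iUnion_of_disjoint _ hs hd).trans (measure_mono (iUnion_subset hst))

section Maximal

variable {n : ℕ}

theorem lebAvg_le_hlMax (f : (Fin n → ℝ) → ℝ≥0∞) {Q : Cube n} {x : Fin n → ℝ}
    (hx : x ∈ Q.toSet) : lebAvg f Q ≤ hlMax f x :=
  le_iSup₂_of_le (f := fun (R : Cube n) (_ : x ∈ R.toSet) => lebAvg f R) Q hx le_rfl

theorem lebAvg_indicator_mul_vol (σ : (Fin n → ℝ) → ℝ≥0∞) {Q m : Cube n}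
    (hQm : Q.toSet ⊆ m.toSet) : lebAvg (m.toSet.indicator σ) Q * ENNReal.ofReal Q.vol = wt σ Q := by
  rw [lebAvg, lintegral_indicator m.measurableSet_toSet,
    Measure.restrict_restrict m.measurableSet_toSet, inter_eq_self_of_subset_right hQm,
    ENNReal.div_mul_cancel (ENNReal.ofReal_pos.2 Q.vol_pos).ne' ofReal_ne_top]
  rfl

theorem wt_le_two_mul_setLIntegral_hlMax (σ : (Fin n → ℝ) → ℝ≥0∞) {Q m : Cube n}
    {F : Set (Fin n → ℝ)} (hF : MeasurableSet F) (hFQ : F ⊆ Q.toSet)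
    (hvol : ENNReal.ofReal Q.vol ≤ 2 * volume F) (hQm : Q.toSet ⊆ m.toSet) :
    wt σ Q ≤ 2 * ∫⁻ x in F, hlMax (m.toSet.indicator σ) x := by
  set a := lebAvg (m.toSet.indicator σ) Q
  calc wt σ Q = a * ENNReal.ofReal Q.vol := (lebAvg_indicator_mul_vol σ hQm).symm
    _ ≤ a * (2 * volume F) := by gcongr
    _ = 2 * ∫⁻ _ in F, a := by rw [setLIntegral_const]; ring
    _ ≤ 2 * ∫⁻ x in F, hlMax (m.toSet.indicator σ) x := by
        gcongr 2 * ?_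
        exact setLIntegral_mono' hF fun x hx => lebAvg_le_hlMax _ (hFQ hx)

theorem tsum_wt_le_two_mul_lintegral_hlMax {D S : Set (Cube n)} (hD : IsDyadicGrid D)
    (hn : n ≠ 0) (hSD : S ⊆ D) (hS : IsSparse S) (σ : (Fin n → ℝ) → ℝ≥0∞) (m : Cube n) :
    ∑' Q : {Q | Q ∈ S ∧ Q.toSet ⊆ m.toSet}, wt σ Q ≤
      2 * ∫⁻ x in m.toSet, hlMax (m.toSet.indicator σ) x := by
  set f := hlMax (m.toSet.indicator σ)
  calc ∑' Q : {Q | Q ∈ S ∧ Q.toSet ⊆ m.toSet}, wt σ Q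
      ≤ ∑' Q : {Q | Q ∈ S ∧ Q.toSet ⊆ m.toSet}, 2 * ∫⁻ x in freePart S Q, f x :=
        ENNReal.tsum_le_tsum fun Q => wt_le_two_mul_setLIntegral_hlMax σ
          (hS.measurableSet_freePart Q.2.1) (freePart_subset S Q)
          (hS.volume_le_two_mul_volume_freePart Q.2.1) Q.2.2
    _ = 2 * ∑' Q : {Q | Q ∈ S ∧ Q.toSet ⊆ m.toSet}, ∫⁻ x in freePart S Q, f x :=
        ENNReal.tsum_mul_left
    _ ≤ 2 * ∫⁻ x in m.toSet, f x := by
        gcongr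
        exact tsum_setLIntegral_le_of_pairwise_disjoint _ f
          (fun Q => hS.measurableSet_freePart Q.2.1)
          (fun Q R hQR => hD.pairwiseDisjoint_freePart hn hSD Q.2.1 R.2.1
            (Subtype.coe_injective.ne hQR))
          (fun Q => (freePart_subset S Q).trans Q.2.2) m.measurableSet_toSet

theorem lintegral_hlMax_eq_entropy_mul_wt {σ : (Fin n → ℝ) → ℝ≥0∞} {Q : Cube n}
    (h : entropy σ Q ≠ 0) :
    ∫⁻ x in Q.toSet, hlMax (Q.toSet.indicator σ) x = entropy σ Q * wt σ Q := by
  have htop : wt σ Q ≠ ⊤ := fun h' => h (by rw [entropy, h', ENNReal.div_top])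
  have hzero : wt σ Q ≠ 0 := by
    intro h0
    have hM : hlMax (Q.toSet.indicator σ) = 0 := by
      funext x
      refine le_antisymm (iSup₂_le fun R _ => ?_) bot_le
      have hR : ∫⁻ y in R.toSet, Q.toSet.indicator σ y = 0 := by
        rw [lintegral_indicator Q.measurableSet_toSet,
          Measure.restrict_restrict Q.measurableSet_toSet]
        exact le_antisymm ((lintegral_mono_set inter_subset_left).trans h0.le) bot_le
      simp [lebAvg, hR]
    exact h (by simp [entropy, hM])
  rw [entropy, ENNReal.div_mul_cancel hzero htop]

end Maximal

section Packing

variable {n : ℕ}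

theorem tsum_wt_rpow_le_of_packing {D T : Set (Cube n)} (hD : IsDyadicGrid D) (hn : n ≠ 0)
    (hTD : T ⊆ D) {P : Cube n} (hTP : ∀ Q ∈ T, Q.toSet ⊆ P.toSet) (σ : (Fin n → ℝ) → ℝ≥0∞)
    {K : ℝ≥0∞} (hpack : ∀ m ∈ T, ∑' Q : {Q | Q ∈ T ∧ Q.toSet ⊆ m.toSet}, wt σ Q ≤ K * wt σ m)
    {s : ℝ} (hs : 1 ≤ s) :
    ∑' Q : T, wt σ Q ^ s ≤ K ^ s * wt σ P ^ s := by
  have hs0 : 0 ≤ s := zero_le_one.trans hs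
  set Tmax := {m | m ∈ T ∧ ∀ R ∈ T, m.toSet ⊆ R.toSet → R = m}
  have hcover : T ⊆ ⋃ m ∈ Tmax, {Q | Q ∈ T ∧ Q.toSet ⊆ m.toSet} := by
    intro Q hQ
    obtain ⟨m, ⟨hmT, hQm⟩, hmax⟩ := hD.exists_maximal hn
      (U := {R | R ∈ T ∧ Q.toSet ⊆ R.toSet}) (fun R hR => hTD hR.1) ⟨Q, hQ, subset_rfl⟩
      fun R hR => hTP R hR.1
    exact mem_biUnion ⟨hmT, fun R hR hmR => hmax R ⟨hR, hQm.trans hmR⟩ hmR⟩ ⟨hQ, hQm⟩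
  have hdisj : Pairwise (Disjoint on fun m : Tmax => m.1.toSet) := by
    intro a b hab
    rw [onFun, Set.disjoint_iff_inter_eq_empty, ← Set.not_nonempty_iff_eq_empty]
    intro hab'
    rcases hD.2.1 a (hTD a.2.1) b (hTD b.2.1) hab' with h | h
    · exact hab (Subtype.ext (a.2.2 b b.2.1 h).symm)
    · exact hab (Subtype.ext (b.2.2 a a.2.1 h))
  calc ∑' Q : T, wt σ Q ^ s
      ≤ ∑' Q : ↥(⋃ m ∈ Tmax, {Q | Q ∈ T ∧ Q.toSet ⊆ m.toSet}), wt σ Q ^ s :=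
        ENNReal.tsum_mono_subtype (fun Q => wt σ Q ^ s) hcover
    _ ≤ ∑' m : Tmax, ∑' Q : {Q | Q ∈ T ∧ Q.toSet ⊆ m.1.toSet}, wt σ Q ^ s :=
        ENNReal.tsum_biUnion_le_tsum (fun Q => wt σ Q ^ s) Tmax _
    _ ≤ ∑' m : Tmax, (K * wt σ m) ^ s := ENNReal.tsum_le_tsum fun m =>
        (ENNReal.tsum_rpow_le_rpow_tsum _ hs).trans (by gcongr; exact hpack m m.2.1)
    _ = K ^ s * ∑' m : Tmax, wt σ m ^ s := by
        simp_rw [ENNReal.mul_rpow_of_nonneg _ _ hs0]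
        exact ENNReal.tsum_mul_left
    _ ≤ K ^ s * (∑' m : Tmax, wt σ m) ^ s := by
        gcongr
        exact ENNReal.tsum_rpow_le_rpow_tsum _ hs
    _ ≤ K ^ s * wt σ P ^ s := by
        gcongr
        exact tsum_setLIntegral_le_of_pairwise_disjoint volume σ
          (fun m => m.1.measurableSet_toSet) hdisj (fun m => hTP m m.2.1) P.measurableSet_toSet

/-- The paper's `S_r`, for the cubes below `P`. -/
def entropyLayer (S : Set (Cube n)) (σ : (Fin n → ℝ) → ℝ≥0∞) (P : Cube n) (r : ℕ) :
    Set (Cube n) :=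
  {Q | Q ∈ S ∧ Q.toSet ⊆ P.toSet ∧
    (2 : ℝ≥0∞) ^ ((r : ℝ) - 1) ≤ entropy σ Q ∧ entropy σ Q ≤ (2 : ℝ≥0∞) ^ (r : ℝ)}

theorem tsum_wt_rpow_entropyLayer_le {D S : Set (Cube n)} (hD : IsDyadicGrid D) (hn : n ≠ 0)
    (hSD : S ⊆ D) (hS : IsSparse S) (σ : (Fin n → ℝ) → ℝ≥0∞) (P : Cube n) (r : ℕ) {s : ℝ}
    (hs : 1 ≤ s) :
    ∑' Q : entropyLayer S σ P r, wt σ Q ^ s ≤ (2 * 2 ^ (r : ℝ)) ^ s * wt σ P ^ s := by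
  refine tsum_wt_rpow_le_of_packing hD hn (fun Q hQ => hSD hQ.1) (fun Q hQ => hQ.2.1) σ
    (fun m hm => ?_) hs
  have hρ : entropy σ m ≠ 0 :=
    ((ENNReal.rpow_pos two_pos ofNat_ne_top).trans_le hm.2.2.1).ne'
  calc ∑' Q : {Q | Q ∈ entropyLayer S σ P r ∧ Q.toSet ⊆ m.toSet}, wt σ Q
      ≤ ∑' Q : {Q | Q ∈ S ∧ Q.toSet ⊆ m.toSet}, wt σ Q :=
        ENNReal.tsum_mono_subtype _ fun Q hQ => ⟨hQ.1.1, hQ.2⟩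
    _ ≤ 2 * (entropy σ m * wt σ m) := by
        rw [← lintegral_hlMax_eq_entropy_mul_wt hρ]
        exact tsum_wt_le_two_mul_lintegral_hlMax hD hn hSD hS σ m
    _ ≤ 2 * 2 ^ (r : ℝ) * wt σ m := by
        rw [← mul_assoc]
        gcongr
        exact hm.2.2.2

end Packing

theorem subsingleton_of_disjoint_of_volume_le {S : Set (Cube 0)} {E : Cube 0 → Set (Fin 0 → ℝ)}
    (hdisj : ∀ Q R : Cube 0, Q ≠ R → Disjoint (E Q) (E R))
    (hvol : ∀ Q ∈ S, ENNReal.ofReal Q.vol ≤ 2 * volume (E Q)) : S.Subsingleton := by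
  have hne : ∀ Q ∈ S, (E Q).Nonempty := fun Q hQ =>
    nonempty_of_measure_ne_zero (μ := volume) fun h0 =>
      Q.vol_pos.not_ge (by simpa [h0] using hvol Q hQ)
  intro Q hQ R hR
  by_contra hQR
  obtain ⟨x, hx⟩ := hne Q hQ
  obtain ⟨y, hy⟩ := hne R hR
  exact Set.disjoint_left.1 (hdisj Q R hQR) hx (Subsingleton.elim y x ▸ hy)

theorem tsum_wt_rpow_le_of_subsingleton {n : ℕ} {T : Set (Cube n)} (hT : T.Subsingleton)
    {P : Cube n} (hTP : ∀ Q ∈ T, Q.toSet ⊆ P.toSet) (σ : (Fin n → ℝ) → ℝ≥0∞) {s : ℝ}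
    (hs : 0 ≤ s) : ∑' Q : T, wt σ Q ^ s ≤ wt σ P ^ s := by
  rcases hT.eq_empty_or_singleton with rfl | ⟨Q, rfl⟩
  · simp
  · rw [tsum_singleton Q fun Q => wt σ Q ^ s]
    exact ENNReal.rpow_le_rpow (lintegral_mono_set (hTP Q rfl)) hs

/-- the entropy-level Carleson estimate
`∑_{Q ∈ S_r} σ(Q)^{q/p} ≲ 2^{qr/p} σ(P)^{q/p}`. -/
theorem stmt10 (n : ℕ) (p q : ℝ) (hp : 1 < p) (hpq : p ≤ q) :
    ∃ C : ℝ≥0∞, C ≠ ∞ ∧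
    ∀ (σ : (Fin n → ℝ) → ℝ≥0∞), Measurable σ →
    ∀ (D : Set (Cube n)), IsDyadicGrid D →
    ∀ S : Set (Cube n), S ⊆ D → IsSparse S →
    ∀ E : Cube n → Set (Fin n → ℝ), (∀ Q, E Q ⊆ Q.toSet) →
      (∀ Q R : Cube n, Q ≠ R → Disjoint (E Q) (E R)) →
      (∀ Q ∈ S, ENNReal.ofReal Q.vol ≤ 2 * volume (E Q)) →
    ∀ P ∈ D, ∀ r : ℕ,
      (∑' Q : {Q : Cube n // Q ∈ S ∧ Q.toSet ⊆ P.toSet ∧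
          (2:ℝ≥0∞) ^ ((r:ℝ) - 1) ≤ entropy σ Q ∧ entropy σ Q ≤ (2:ℝ≥0∞) ^ (r:ℝ)},
          wt σ Q.1 ^ (q/p))
        ≤ C * (2:ℝ≥0∞) ^ (q * r / p) * wt σ P ^ (q/p) := by
  have hs : 1 ≤ q / p := (one_le_div (zero_lt_one.trans hp)).2 hpq
  have hs0 : 0 < q / p := zero_lt_one.trans_le hs
  refine ⟨2 ^ (q / p), ENNReal.rpow_ne_top_of_nonneg hs0.le ofNat_ne_top, ?_⟩
  intro σ _ D hD S hSD hS E _ hEdisj hEvol P _ r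
  have hbound : ∑' Q : entropyLayer S σ P r, wt σ Q ^ (q / p) ≤
      (2 * 2 ^ (r : ℝ)) ^ (q / p) * wt σ P ^ (q / p) := by
    rcases eq_or_ne n 0 with rfl | hn
    · refine (tsum_wt_rpow_le_of_subsingleton
        ((subsingleton_of_disjoint_of_volume_le hEdisj hEvol).anti fun Q hQ => hQ.1)
        (fun Q hQ => hQ.2.1) σ hs0.le).trans (le_mul_of_one_le_left' (ENNReal.one_le_rpow ?_ hs0))
      rw [ENNReal.rpow_natCast]
      exact one_le_mul (by norm_num) (one_le_pow₀ (by norm_num))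
    · exact tsum_wt_rpow_entropyLayer_le hD hn hSD hS σ P r hs
  calc _ ≤ _ := hbound
    _ = 2 ^ (q / p) * 2 ^ (q * r / p) * wt σ P ^ (q / p) := by
        rw [ENNReal.mul_rpow_of_nonneg _ _ hs0.le, ← ENNReal.rpow_mul]
        ring_nf
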